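/- Let f(x,z) and g(y,z) be rational functions in Q(x,y,z) such that f(x,z) = f((1/x)·g(y,z), z) as rational functions. Then ∂f/∂x = 0 or ∂g/∂y = 0. -/

import Mathlib

open MvPolynomial

noncomputable section

/-- The field `ℚ(x,y,z)` of rational functions in three variables. -/
abbrev Fld : Type := FractionRing (MvPolynomial (Fin 3) ℚ)

/-- The variables `x = Xv 0`, `y = Xv 1`, `z = Xv 2` of `ℚ(x,y,z)`. -/
def Xv (i : Fin 3) : Fld := algebraMap (MvPolynomial (Fin 3) ℚ) Fld (X i)

/-!
Extend `∂/∂y` to a derivation `D` of `ℚ(x,y,z)`. Applying `D` to `f(x,z) = f(t,z)` with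
`t = g(y,z)/x` kills the left side, while the chain rule turns the right side into
`∂ₓf(t,z) · ∂_y g(y,z) / x`. So `∂ₓf(t,z) = 0` or `∂_y g = 0`. In the first case, if `g ≠ 0`,
then `x = g/t` is algebraic over `ℚ[t,y,z]`, so by the exchange property `t, y, z` is again a
transcendence basis; hence `t` and `z` are algebraically independent and `∂ₓf = 0`.
-/

namespace Derivation

section ChainRule

variable {R A M σ : Type*} [CommRing R] [CommRing A] [Algebra R A] [AddCommGroup M] [Module A M]
  [Module R M] [Fintype σ]

theorem map_aeval_eq_sum_pderiv (D : Derivation R A M) (v : σ → A) (p : MvPolynomial σ R) :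
    D (aeval v p) = ∑ i, aeval v (pderiv i p) • D (v i) := by
  classical
  induction p using MvPolynomial.induction_on with
  | C r => simp
  | add p q hp hq => simp only [map_add, hp, hq, add_smul, Finset.sum_add_distrib]
  | mul_X p i hp =>
    have hpX (j : σ) : aeval v (pderiv j (p * X i))
        = aeval v (pderiv j p) * v i + if i = j then aeval v p else 0 := by
      rw [pderiv_mul, pderiv_X, map_add, map_mul, map_mul, aeval_X, Pi.single_apply]
      split_ifs <;> simp
    simp only [hpX, add_smul, ite_smul, zero_smul, Finset.sum_add_distrib, Finset.sum_ite_eq,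
      Finset.mem_univ, if_true, map_mul, aeval_X, D.leibniz, hp, Finset.smul_sum, mul_smul]
    rw [add_comm]
    congr 1
    exact Finset.sum_congr rfl fun j _ => smul_comm _ _ _

theorem map_aeval_eq_pderiv_smul (D : Derivation R A M) (v : σ → A) {i : σ}
    (hv : ∀ j ≠ i, D (v j) = 0) (p : MvPolynomial σ R) :
    D (aeval v p) = aeval v (pderiv i p) • D (v i) := by
  rw [map_aeval_eq_sum_pderiv, Finset.sum_eq_single i (fun j _ hj => by rw [hv j hj, smul_zero])
    (by simp)]

end ChainRule

section Field

variable {R K σ : Type*} [CommRing R] [Field K] [Algebra R K] (D : Derivation R K K)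

theorem map_aeval_div_aeval [Fintype σ] (v : σ → K) {i : σ} (hv : ∀ j ≠ i, D (v j) = 0)
    (p q : MvPolynomial σ R) :
    D (aeval v p / aeval v q)
      = aeval v (q * pderiv i p - p * pderiv i q) / aeval v q ^ 2 * D (v i) := by
  rw [D.leibniz_div, map_aeval_eq_pderiv_smul D v hv, map_aeval_eq_pderiv_smul D v hv,
    map_sub, map_mul, map_mul, div_eq_mul_inv, inv_pow]
  simp only [smul_eq_mul]
  ring

theorem map_inv_mul_of_map_eq_zero {a : K} (ha : D a = 0) (b : K) : D (a⁻¹ * b) = a⁻¹ * D b := by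
  rw [D.leibniz, D.leibniz_inv, ha]
  simp

end Field

section FractionRing

open TrivSqZeroExt

-- `TrivSqZeroExt K K` is `DualNumber K`, whose simp set would rewrite `inr` in terms of `ε`.
attribute [-simp] DualNumber.inr_eq_smul_eps

variable {R A K : Type*} [CommRing R] [CommRing A] [Field K] [Algebra R A] [Algebra A K]

/-- The ring map `a ↦ a + d(a) ε` into the dual numbers over `K`. It extends to `K` because its
values on non-zero-divisors are units, and the `ε`-part of the extension is the extended
derivation. -/
def toTrivSqZeroExt (d : Derivation R A A) : A →+* TrivSqZeroExt K K where
  toFun a := inl (algebraMap A K a) + inr (algebraMap A K (d a))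
  map_one' := by simp
  map_mul' a b := by
    ext
    · simp
    · rw [snd_mul]; simp [d.leibniz]; ring
  map_zero' := by simp
  map_add' a b := by ext <;> simp

variable [IsFractionRing A K]

theorem isUnit_toTrivSqZeroExt (d : Derivation R A A) (a : nonZeroDivisors A) :
    IsUnit (d.toTrivSqZeroExt (K := K) a) :=
  isUnit_iff_isUnit_fst.mpr (by simpa [toTrivSqZeroExt] using IsLocalization.map_units K a)

def liftTrivSqZeroExt (d : Derivation R A A) : K →+* TrivSqZeroExt K K :=
  IsLocalization.lift d.isUnit_toTrivSqZeroExt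

theorem liftTrivSqZeroExt_algebraMap (d : Derivation R A A) (a : A) :
    d.liftTrivSqZeroExt (algebraMap A K a) = inl (algebraMap A K a) + inr (algebraMap A K (d a)) :=
  IsLocalization.lift_eq d.isUnit_toTrivSqZeroExt a

theorem fst_liftTrivSqZeroExt (d : Derivation R A A) (k : K) :
    (d.liftTrivSqZeroExt k).fst = k := by
  have : (fstHom K K K : TrivSqZeroExt K K →+* K).comp d.liftTrivSqZeroExt = RingHom.id K :=
    IsLocalization.ringHom_ext (nonZeroDivisors A)
      (by ext a; simp [liftTrivSqZeroExt_algebraMap])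
  exact DFunLike.congr_fun this k

variable [Algebra R K] [IsScalarTower R A K]

def extendFractionRing (d : Derivation R A A) : Derivation R K K :=
  Derivation.mk'
    { toFun := fun k => (d.liftTrivSqZeroExt k).snd
      map_add' := fun k l => by simp
      map_smul' := fun r k => by
        rw [Algebra.smul_def, IsScalarTower.algebraMap_apply R A K, map_mul,
          liftTrivSqZeroExt_algebraMap, snd_mul]
        simp [fst_liftTrivSqZeroExt, ← IsScalarTower.algebraMap_apply, ← Algebra.smul_def] }
    fun k l => by
      rw [LinearMap.coe_mk, AddHom.coe_mk, map_mul, snd_mul]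
      simp [fst_liftTrivSqZeroExt]
      ring

theorem extendFractionRing_algebraMap (d : Derivation R A A) (a : A) :
    d.extendFractionRing (algebraMap A K a) = algebraMap A K (d a) := by
  simp [extendFractionRing, liftTrivSqZeroExt_algebraMap]

end FractionRing

end Derivation

/-- Left unannotated on purpose: the type `Derivation ℚ Fld Fld` would elaborate with the
`OreLocalization` ℚ-module structure on `Fld`, which is not definitionally equal to the one
coming from `Algebra ℚ Fld`. -/
def derivY := (pderiv 1 : Derivation ℚ (MvPolynomial (Fin 3) ℚ) _).extendFractionRing (K := Fld)

theorem derivY_Xv (i : Fin 3) :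
    derivY (Xv i) = algebraMap (MvPolynomial (Fin 3) ℚ) Fld (pderiv 1 (X i)) :=
  Derivation.extendFractionRing_algebraMap (pderiv 1) (X i)

theorem derivY_Xv_one : derivY (Xv 1) = 1 := by
  rw [derivY_Xv, pderiv_X_self, map_one]

theorem derivY_Xv_of_ne {i : Fin 3} (hi : i ≠ 1) : derivY (Xv i) = 0 := by
  rw [derivY_Xv, pderiv_X_of_ne hi, map_zero]

theorem derivY_vecCons_Xv_two (a : Fld) : ∀ j ≠ 0, derivY (![a, Xv 2] j) = 0 := by
  intro j hj
  rw [Fin.eq_one_of_ne_zero j hj]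
  exact derivY_Xv_of_ne (by decide)

theorem isTranscendenceBasis_Xv : IsTranscendenceBasis ℚ Xv :=
  have := IsLocalization.isAlgebraic Fld (nonZeroDivisors (MvPolynomial (Fin 3) ℚ))
  (IsTranscendenceBasis.mvPolynomial (Fin 3) ℚ).algebraMap_comp

theorem Xv_ne_zero (i : Fin 3) : Xv i ≠ 0 :=
  isTranscendenceBasis_Xv.1.ne_zero i

theorem algebraicIndependent_Xv_one_two : AlgebraicIndependent ℚ ![Xv 1, Xv 2] := by
  convert isTranscendenceBasis_Xv.1.comp ![1, 2] (by decide)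
  funext i; fin_cases i <;> rfl

theorem aeval_Xv_one_two_ne_zero {p : MvPolynomial (Fin 2) ℚ} (hp : p ≠ 0) :
    aeval ![Xv 1, Xv 2] p ≠ 0 :=
  fun h => hp (algebraicIndependent_Xv_one_two.eq_zero_of_aeval_eq_zero p h)

theorem algebraicIndependent_inv_mul_div_Xv_two {gp gq : MvPolynomial (Fin 2) ℚ}
    (hgp : gp ≠ 0) (hgq : gq ≠ 0) :
    AlgebraicIndependent ℚ
      ![(Xv 0)⁻¹ * (aeval ![Xv 1, Xv 2] gp / aeval ![Xv 1, Xv 2] gq), Xv 2] := by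
  set a := aeval ![Xv 1, Xv 2] gp
  set b := aeval ![Xv 1, Xv 2] gq
  set t := (Xv 0)⁻¹ * (a / b)
  set w : Fin 4 → Fld := ![t, Xv 0, Xv 1, Xv 2]
  have hbasis : IsTranscendenceBasis ℚ fun k : {k // k ≠ (0 : Fin 4)} => w k :=
    (isTranscendenceBasis_equiv' (finSuccAboveEquiv 0) (by funext i; fin_cases i <;> rfl)).mp
      isTranscendenceBasis_Xv
  have hyz : Algebra.adjoin ℚ (Set.range ![Xv 1, Xv 2]) ≤ Algebra.adjoin ℚ (w '' {1}ᶜ) := by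
    refine Algebra.adjoin_mono ?_
    rintro _ ⟨i, rfl⟩
    fin_cases i
    exacts [⟨2, by decide, rfl⟩, ⟨3, by decide, rfl⟩]
  have hmem (p : MvPolynomial (Fin 2) ℚ) :
      aeval ![Xv 1, Xv 2] p ∈ Algebra.adjoin ℚ (w '' {1}ᶜ) :=
    hyz ((Algebra.adjoin_range_eq_range_aeval ℚ ![Xv 1, Xv 2]).symm ▸ ⟨p, rfl⟩)
  have ht : t ∈ Algebra.adjoin ℚ (w '' {1}ᶜ) := Algebra.subset_adjoin ⟨0, by decide, rfl⟩
  have hx : IsAlgebraic (Algebra.adjoin ℚ (w '' {1}ᶜ)) (w 1) := by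
    have : w 1 = a * (t * b)⁻¹ := by
      have hx0 : Xv 0 ≠ 0 := Xv_ne_zero 0
      have ha : a ≠ 0 := aeval_Xv_one_two_ne_zero hgp
      have hb : b ≠ 0 := aeval_Xv_one_two_ne_zero hgq
      change Xv 0 = a * ((Xv 0)⁻¹ * (a / b) * b)⁻¹
      field_simp
    rw [this]
    exact (isAlgebraic_algebraMap (⟨a, hmem gp⟩ : Algebra.adjoin ℚ (w '' {1}ᶜ))).mul
      (isAlgebraic_algebraMap (⟨t * b, mul_mem ht (hmem gq)⟩ : Algebra.adjoin ℚ (w '' {1}ᶜ))).inv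
  have := (hbasis.of_isAlgebraic_adjoin_image_compl 0 1 w hx).1.comp
    (fun i : Fin 2 => (⟨![0, 3] i, by fin_cases i <;> decide⟩ : {k // k ≠ (1 : Fin 4)}))
    (by intro i j h; fin_cases i <;> fin_cases j <;> simp_all)
  convert this using 1
  funext i; fin_cases i <;> rfl

/-- `f = fp/fq` and `g = gp/gq`; the vanishing of the derivative of a quotient `p/q` is expressed
by the vanishing of its numerator `q·∂p - p·∂q`. -/
theorem stmt0_general (fp fq gp gq : MvPolynomial (Fin 2) ℚ)
    (hgq : gq ≠ 0)
    (hsub : aeval ![(Xv 0)⁻¹ * (aeval ![Xv 1, Xv 2] gp / aeval ![Xv 1, Xv 2] gq), Xv 2] fq ≠ 0)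
    (heq : aeval ![Xv 0, Xv 2] fp / aeval ![Xv 0, Xv 2] fq =
      aeval ![(Xv 0)⁻¹ * (aeval ![Xv 1, Xv 2] gp / aeval ![Xv 1, Xv 2] gq), Xv 2] fp /
      aeval ![(Xv 0)⁻¹ * (aeval ![Xv 1, Xv 2] gp / aeval ![Xv 1, Xv 2] gq), Xv 2] fq) :
    fq * pderiv 0 fp - fp * pderiv 0 fq = 0 ∨ gq * pderiv 0 gp - gp * pderiv 0 gq = 0 := by
  by_cases hgp : gp = 0
  · right; simp [hgp]
  set t := (Xv 0)⁻¹ * (aeval ![Xv 1, Xv 2] gp / aeval ![Xv 1, Xv 2] gq)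
  have hDt : derivY t = (Xv 0)⁻¹ * (aeval ![Xv 1, Xv 2] (gq * pderiv 0 gp - gp * pderiv 0 gq)
      / aeval ![Xv 1, Xv 2] gq ^ 2) := by
    rw [derivY.map_inv_mul_of_map_eq_zero (derivY_Xv_of_ne (by decide)),
      derivY.map_aeval_div_aeval _ (derivY_vecCons_Xv_two _), Matrix.cons_val_zero, derivY_Xv_one,
      mul_one]
  have hD := congrArg derivY heq
  rw [derivY.map_aeval_div_aeval _ (derivY_vecCons_Xv_two _),
    derivY.map_aeval_div_aeval _ (derivY_vecCons_Xv_two _), Matrix.cons_val_zero,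
    Matrix.cons_val_zero, hDt, derivY_Xv_of_ne (by decide), mul_zero] at hD
  simp only [eq_comm (a := (0 : Fld)), mul_eq_zero, div_eq_zero_iff, inv_eq_zero, pow_eq_zero_iff,
    hsub, Xv_ne_zero, aeval_Xv_one_two_ne_zero hgq, ne_eq, OfNat.ofNat_ne_zero, not_false_eq_true,
    or_false, false_or] at hD
  rcases hD with hf | hg
  · exact .inl ((algebraicIndependent_inv_mul_div_Xv_two hgp hgq).eq_zero_of_aeval_eq_zero _ hf)
  · exact .inr (algebraicIndependent_Xv_one_two.eq_zero_of_aeval_eq_zero _ hg)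

/-- If `f(x,z) = fp/fq` and `g(y,z) = gp/gq` are rational functions with
`f(x,z) = f((1/x)·g(y,z), z)` in `ℚ(x,y,z)` (the substitution being well defined),
then `∂f/∂x = 0` or `∂g/∂y = 0`. The vanishing of the derivative of a quotient `p/q`
is expressed by the vanishing of its numerator `q·∂p - p·∂q`. -/
theorem stmt0 (fp fq gp gq : MvPolynomial (Fin 2) ℚ)
    (hfq : fq ≠ 0) (hgq : gq ≠ 0)
    (hsub : aeval ![(Xv 0)⁻¹ * (aeval ![Xv 1, Xv 2] gp / aeval ![Xv 1, Xv 2] gq), Xv 2] fq ≠ 0)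
    (heq : aeval ![Xv 0, Xv 2] fp / aeval ![Xv 0, Xv 2] fq =
      aeval ![(Xv 0)⁻¹ * (aeval ![Xv 1, Xv 2] gp / aeval ![Xv 1, Xv 2] gq), Xv 2] fp /
      aeval ![(Xv 0)⁻¹ * (aeval ![Xv 1, Xv 2] gp / aeval ![Xv 1, Xv 2] gq), Xv 2] fq) :
    fq * pderiv 0 fp - fp * pderiv 0 fq = 0 ∨ gq * pderiv 0 gp - gp * pderiv 0 gq = 0 :=
  stmt0_general fp fq gp gq hgq hsub heq
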